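/- The group B_2(C_3) is isomorphic to Z, with generator [1,1]; moreover [1,2] = 0 and [0,1] = [1,1] = -[2,2] = -[0,2] in B_2(C_3). -/

import Mathlib

open FreeAbelianGroup

/-- A multiset of characters generates the character group. -/
def Adm {A : Type} [AddCommGroup A] (s : Multiset A) : Prop :=
  AddSubgroup.closure {x | x ∈ s} = ⊤

/-- Admissible symbols: multisets of `n` characters generating `A`. -/
def Symb (A : Type) [AddCommGroup A] (n : ℕ) : Type :=
  {s : Multiset A // Multiset.card s = n ∧ Adm s}

/-- The blow-up relations (B₂). -/
def blowupRels (A : Type) [AddCommGroup A] (n : ℕ) :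
    Set (FreeAbelianGroup (Symb A n)) :=
  {x | ∃ (a b : A) (t : Multiset A)
      (h : Multiset.card (a ::ₘ b ::ₘ t) = n ∧ Adm (a ::ₘ b ::ₘ t))
      (h1 : Multiset.card (a ::ₘ (b - a) ::ₘ t) = n ∧ Adm (a ::ₘ (b - a) ::ₘ t))
      (h2 : Multiset.card ((a - b) ::ₘ b ::ₘ t) = n ∧ Adm ((a - b) ::ₘ b ::ₘ t)),
      a ≠ b ∧
      x = of (⟨a ::ₘ b ::ₘ t, h⟩ : Symb A n) - of ⟨a ::ₘ (b - a) ::ₘ t, h1⟩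
            - of ⟨(a - b) ::ₘ b ::ₘ t, h2⟩} ∪
  {x | ∃ (a : A) (t : Multiset A)
      (h : Multiset.card (a ::ₘ a ::ₘ t) = n ∧ Adm (a ::ₘ a ::ₘ t))
      (h0 : Multiset.card ((0 : A) ::ₘ a ::ₘ t) = n ∧ Adm ((0 : A) ::ₘ a ::ₘ t)),
      x = of (⟨a ::ₘ a ::ₘ t, h⟩ : Symb A n) - of ⟨(0 : A) ::ₘ a ::ₘ t, h0⟩}

/-- The group of equivariant birational types `𝓑ₙ(G)`, for `A = G^∨`. -/
def B (A : Type) [AddCommGroup A] (n : ℕ) : Type :=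
  FreeAbelianGroup (Symb A n) ⧸ AddSubgroup.closure (blowupRels A n)

instance (A : Type) [AddCommGroup A] (n : ℕ) : AddCommGroup (B A n) := by
  unfold B; infer_instance

/-- The class of a symbol in `𝓑ₙ(G)`. -/
def symb {A : Type} [AddCommGroup A] {n : ℕ} (s : Multiset A)
    (h : Multiset.card s = n ∧ Adm s) : B A n :=
  QuotientAddGroup.mk (of (⟨s, h⟩ : Symb A n))

lemma adm_of_unit {N : ℕ} [NeZero N] {s : Multiset (ZMod N)} {u : ZMod N}
    (hu : u ∈ s) (h : IsUnit u) : Adm s := by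
  rw [Adm, AddSubgroup.eq_top_iff']
  intro x
  have hu' : u ∈ AddSubgroup.closure {y | y ∈ s} := AddSubgroup.subset_closure hu
  obtain ⟨v, hv⟩ := h.exists_left_inv
  have hx : x = (x * v).val • u := by
    rw [nsmul_eq_mul, ZMod.natCast_val, ZMod.cast_id, mul_assoc, hv, mul_one]
  rw [hx]
  exact AddSubgroup.nsmul_mem _ hu' _

lemma admU {N : ℕ} [NeZero N] {s : Multiset (ZMod N)} {u v : ZMod N}
    (hu : u ∈ s) (huv : u * v = 1) : Adm s :=
  adm_of_unit hu ⟨⟨u, v, huv, by rw [mul_comm]; exact huv⟩, rfl⟩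

/-- The symbol `[1,1]` in `B₂(C₃)`. -/
def c3_11 : B (ZMod 3) 2 :=
  symb {1, 1} ⟨by decide, admU (u := 1) (v := 1) (by decide) (by decide)⟩

/-- The symbol `[1,2]` in `B₂(C₃)`. -/
def c3_12 : B (ZMod 3) 2 :=
  symb {1, 2} ⟨by decide, admU (u := 1) (v := 1) (by decide) (by decide)⟩

/-- The symbol `[0,1]` in `B₂(C₃)`. -/
def c3_01 : B (ZMod 3) 2 :=
  symb {0, 1} ⟨by decide, admU (u := 1) (v := 1) (by decide) (by decide)⟩

/-- The symbol `[2,2]` in `B₂(C₃)`. -/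
def c3_22 : B (ZMod 3) 2 :=
  symb {2, 2} ⟨by decide, admU (u := 2) (v := 2) (by decide) (by decide)⟩

/-- The symbol `[0,2]` in `B₂(C₃)`. -/
def c3_02 : B (ZMod 3) 2 :=
  symb {0, 2} ⟨by decide, admU (u := 2) (v := 2) (by decide) (by decide)⟩

/-!
The blow-up relation at `(0,1)` reads `[0,1] = [0,1] + [2,1]`, so `[1,2] = 0`; the one at `(1,2)` then
gives `[2,2] = -[1,1]`, and the diagonal relations identify `[0,1]` with `[1,1]` and `[0,2]` with
`[2,2]`. Hence every symbol is an integral multiple of `[1,1]`. Conversely the weight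
`s ↦ [1 ∈ s] - [2 ∈ s]` satisfies all relations, so it descends to a homomorphism `B₂(C₃) → ℤ` with
`[1,1] ↦ 1`, which is inverse to `k ↦ k • [1,1]`.
-/

section General

variable {A : Type} [AddCommGroup A] {n : ℕ}

lemma symb_pair_comm (a b : A) (h : Multiset.card {a, b} = n ∧ Adm {a, b}) :
    symb {a, b} h = symb {b, a} (Multiset.pair_comm a b ▸ h) := by
  congr 1
  exact Multiset.pair_comm a b

lemma symb_blowup {a b : A} {t : Multiset A} (hab : a ≠ b)
    (h : Multiset.card (a ::ₘ b ::ₘ t) = n ∧ Adm (a ::ₘ b ::ₘ t))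
    (h1 : Multiset.card (a ::ₘ (b - a) ::ₘ t) = n ∧ Adm (a ::ₘ (b - a) ::ₘ t))
    (h2 : Multiset.card ((a - b) ::ₘ b ::ₘ t) = n ∧ Adm ((a - b) ::ₘ b ::ₘ t)) :
    symb (a ::ₘ b ::ₘ t) h = symb (a ::ₘ (b - a) ::ₘ t) h1 + symb ((a - b) ::ₘ b ::ₘ t) h2 := by
  rw [← sub_eq_zero, ← sub_sub]
  exact (QuotientAddGroup.eq_zero_iff _).mpr
    (AddSubgroup.subset_closure (Or.inl ⟨a, b, t, h, h1, h2, hab, rfl⟩))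

lemma symb_diag {a : A} {t : Multiset A}
    (h : Multiset.card (a ::ₘ a ::ₘ t) = n ∧ Adm (a ::ₘ a ::ₘ t))
    (h0 : Multiset.card ((0 : A) ::ₘ a ::ₘ t) = n ∧ Adm ((0 : A) ::ₘ a ::ₘ t)) :
    symb (a ::ₘ a ::ₘ t) h = symb ((0 : A) ::ₘ a ::ₘ t) h0 := by
  rw [← sub_eq_zero]
  exact (QuotientAddGroup.eq_zero_iff _).mpr
    (AddSubgroup.subset_closure (Or.inr ⟨a, t, h, h0, rfl⟩))

lemma not_adm_of_forall_eq_zero [Nontrivial A] {s : Multiset A} (hs : ∀ x ∈ s, x = 0) :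
    ¬ Adm s := by
  intro h
  refine bot_ne_top (α := AddSubgroup A) (eq_top_iff.mpr ?_)
  rw [← h, AddSubgroup.closure_le]
  exact fun x hx => AddSubgroup.mem_bot.mpr (hs x hx)

variable {M : Type*} [AddCommGroup M]

def B.lift (f : Multiset A → M)
    (hblowup : ∀ a b t, a ≠ b → Multiset.card (a ::ₘ b ::ₘ t) = n →
      f (a ::ₘ b ::ₘ t) = f (a ::ₘ (b - a) ::ₘ t) + f ((a - b) ::ₘ b ::ₘ t))
    (hdiag : ∀ a t, Multiset.card (a ::ₘ a ::ₘ t) = n → f (a ::ₘ a ::ₘ t) = f (0 ::ₘ a ::ₘ t)) :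
    B A n →+ M :=
  QuotientAddGroup.lift _ (FreeAbelianGroup.lift fun s => f s.1) <|
    (AddSubgroup.closure_le _).mpr <| by
      -- `erw`: the symbols in `blowupRels` are subtypes seen through the definition `Symb`
      rintro x (⟨a, b, t, h, h1, h2, hab, rfl⟩ | ⟨a, t, h, h0, rfl⟩) <;>
        erw [SetLike.mem_coe, AddMonoidHom.mem_ker, map_sub]
      · erw [map_sub, FreeAbelianGroup.lift_apply_of, FreeAbelianGroup.lift_apply_of,
          FreeAbelianGroup.lift_apply_of, hblowup a b t hab h.1]
        abel
      · erw [FreeAbelianGroup.lift_apply_of, FreeAbelianGroup.lift_apply_of, hdiag a t h.1,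
          sub_self]

@[simp]
lemma B.lift_symb (f : Multiset A → M) hblowup hdiag (s : Multiset A)
    (hs : Multiset.card s = n ∧ Adm s) : B.lift f hblowup hdiag (symb s hs) = f s :=
  FreeAbelianGroup.lift_apply_of _ _

lemma B.hom_ext {f g : B A n →+ M} (h : ∀ s hs, f (symb s hs) = g (symb s hs)) : f = g :=
  QuotientAddGroup.addMonoidHom_ext _ <| FreeAbelianGroup.lift_ext _ _ fun s => h s.1 s.2

end General

lemma c3_12_eq_zero : c3_12 = 0 := by
  have h : c3_01 = c3_01 + c3_12 := by
    rw [c3_12, symb_pair_comm]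
    exact symb_blowup (show (0 : ZMod 3) ≠ 1 by decide) _ _ _
  exact left_eq_add.mp h

lemma c3_01_eq_c3_11 : c3_01 = c3_11 :=
  (symb_diag (a := (1 : ZMod 3)) (t := 0) _ _).symm

lemma c3_22_eq_c3_02 : c3_22 = c3_02 :=
  symb_diag (a := (2 : ZMod 3)) (t := 0) _ _

lemma c3_11_eq_neg_c3_22 : c3_11 = -c3_22 := by
  have h : c3_12 = c3_11 + c3_22 := symb_blowup (show (1 : ZMod 3) ≠ 2 by decide) _ _ _
  rw [c3_12_eq_zero] at h
  exact eq_neg_of_add_eq_zero_left h.symm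

def weightC3 (s : Multiset (ZMod 3)) : ℤ :=
  (if 1 ∈ s then 1 else 0) - (if 2 ∈ s then 1 else 0)

lemma weightC3_blowup (a b : ZMod 3) (t : Multiset (ZMod 3)) (hab : a ≠ b)
    (ht : Multiset.card (a ::ₘ b ::ₘ t) = 2) :
    weightC3 (a ::ₘ b ::ₘ t) = weightC3 (a ::ₘ (b - a) ::ₘ t) + weightC3 ((a - b) ::ₘ b ::ₘ t) := by
  obtain rfl : t = 0 := by simpa using ht
  revert a b
  decide

lemma weightC3_diag (a : ZMod 3) (t : Multiset (ZMod 3))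
    (ht : Multiset.card (a ::ₘ a ::ₘ t) = 2) :
    weightC3 (a ::ₘ a ::ₘ t) = weightC3 (0 ::ₘ a ::ₘ t) := by
  obtain rfl : t = 0 := by simpa using ht
  revert a
  decide

def weightC3Hom : B (ZMod 3) 2 →+ ℤ := B.lift weightC3 weightC3_blowup weightC3_diag

lemma weightC3Hom_c3_11 : weightC3Hom c3_11 = 1 :=
  (B.lift_symb _ _ _ _ _).trans (by decide)

lemma symb_eq_weightC3_smul (s : Multiset (ZMod 3)) (hs : Multiset.card s = 2 ∧ Adm s) :
    symb s hs = weightC3 s • c3_11 := by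
  have c3_22_eq : c3_22 = -c3_11 := (neg_eq_iff_eq_neg.mpr c3_11_eq_neg_c3_22).symm
  have c3_02_eq : c3_02 = -c3_11 := c3_22_eq_c3_02 ▸ c3_22_eq
  have cases : ∀ a : ZMod 3, a = 0 ∨ a = 1 ∨ a = 2 := by decide
  obtain ⟨a, b, rfl⟩ := Multiset.card_eq_two.mp hs.1
  -- `exact` unfolds `weightC3 {a, b}` to its numeral value
  rcases cases a with rfl | rfl | rfl <;> rcases cases b with rfl | rfl | rfl
  · exact absurd hs.2 (not_adm_of_forall_eq_zero (by simp))
  · exact c3_01_eq_c3_11.trans (one_smul ℤ _).symm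
  · exact c3_02_eq.trans (neg_one_zsmul _).symm
  · exact (symb_pair_comm _ _ _).trans <| c3_01_eq_c3_11.trans (one_smul ℤ _).symm
  · exact (one_smul ℤ _).symm
  · exact c3_12_eq_zero.trans (zero_smul ℤ _).symm
  · exact (symb_pair_comm _ _ _).trans <| c3_02_eq.trans (neg_one_zsmul _).symm
  · exact (symb_pair_comm _ _ _).trans <| c3_12_eq_zero.trans (zero_smul ℤ _).symm
  · exact c3_22_eq.trans (neg_one_zsmul _).symm

def weightC3Equiv : B (ZMod 3) 2 ≃+ ℤ :=
  AddMonoidHom.toAddEquiv weightC3Hom (zmultiplesHom _ c3_11)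
    (B.hom_ext fun s hs => by
      rw [AddMonoidHom.comp_apply, AddMonoidHom.id_apply, weightC3Hom, B.lift_symb,
        zmultiplesHom_apply, symb_eq_weightC3_smul])
    (AddMonoidHom.ext_int <| by simp [weightC3Hom_c3_11])

/-- `B₂(C₃) ≅ ℤ` with generator `[1,1]`; moreover `[1,2] = 0`
and `[0,1] = [1,1] = -[2,2] = -[0,2]`. -/
theorem B2_C3_int :
    (∃ φ : B (ZMod 3) 2 ≃+ ℤ, φ c3_11 = 1) ∧
    c3_12 = 0 ∧ c3_01 = c3_11 ∧ c3_11 = -c3_22 ∧ c3_22 = c3_02 :=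
  ⟨⟨weightC3Equiv, weightC3Hom_c3_11⟩, c3_12_eq_zero, c3_01_eq_c3_11, c3_11_eq_neg_c3_22,
    c3_22_eq_c3_02⟩
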